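/- arXiv:2407.14422 — 2 statements merged into one kernel-verified Lean document; each statement's English description precedes it below -/
import Mathlib

section
/- Let W be a graphon and assume there exist η > 0 and intervals J_1, J_2 ⊆ [0,1], each of length ℓ with 0 < ℓ ≤ 1, such that W(x,y) ≥ η for all (x,y) ∈ J_1 × J_2. Let N ≥ 1 and let U_1, …, U_N be independent random variables, each uniformly distributed on [0,1], and define d̄_{(N)} = max_{1≤i≤N} Σ_{j=1}^N W(U_i, U_j). Then P[ d̄_{(N)} ≥ η N ℓ / 4 ] ≥ (1 − exp(−N ℓ²/4)) · (1 − (1−ℓ)^{⌊N/2⌋}). -/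
/-!
Split the vertices into a set `S` of `⌊N/2⌋` vertices and its complement `T`. With probability
`1 - (1 - ℓ)^⌊N/2⌋` some `U_i` with `i ∈ S` lands in `J₁`. The number of `j ∈ T` with
`U_j ∈ J₂` has mean `|T| ℓ ≥ N ℓ / 2`, so by Hoeffding's inequality it is at least `N ℓ / 4`
with probability at least `1 - exp (-N ℓ² / 4)`. The two events depend on disjoint families of
independent variables, hence are independent, and on their intersection the degree of vertex `i`
is at least `η N ℓ / 4`, because `W ≥ η` on `J₁ × J₂` and `W ≥ 0` elsewhere.
-/

open MeasureTheory Real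

lemma ae_mem_of_map_eq_restrict {Ω α : Type*} [MeasurableSpace Ω] [MeasurableSpace α]
    {P : Measure Ω} {U : Ω → α} {ν : Measure α} {s : Set α} (hU : Measurable U)
    (hs : MeasurableSet s) (hlaw : P.map U = ν.restrict s) : ∀ᵐ ω ∂P, U ω ∈ s := by
  refine ae_of_ae_map hU.aemeasurable ?_
  rw [hlaw]
  exact ae_restrict_mem hs

lemma measureReal_preimage_Icc_of_map_eq_restrict_Icc {Ω : Type*} [MeasurableSpace Ω]
    {P : Measure Ω} {U : Ω → ℝ} (hU : Measurable U)
    (hlaw : P.map U = volume.restrict (Set.Icc 0 1)) {a ℓ : ℝ}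
    (hJ : Set.Icc a (a + ℓ) ⊆ Set.Icc 0 1) (hℓ : 0 ≤ ℓ) : P.real (U ⁻¹' Set.Icc a (a + ℓ)) = ℓ := by
  rw [measureReal_def, ← Measure.map_apply hU measurableSet_Icc, hlaw,
    Measure.restrict_apply measurableSet_Icc, Set.inter_eq_self_of_subset_left hJ,
    Real.volume_Icc, add_sub_cancel_left, ENNReal.toReal_ofReal hℓ]

namespace ProbabilityTheory

variable {Ω ι β : Type*} [MeasurableSpace Ω] [MeasurableSpace β] {P : Measure Ω} [Fintype ι]
  {V : ι → Ω → β} {B : Set β} {p : ℝ}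

lemma iIndepFun.measureReal_exists_mem (h : iIndepFun V P) (hV : ∀ i, Measurable (V i))
    (hB : MeasurableSet B) (hp : ∀ i, P.real (V i ⁻¹' B) = p) :
    P.real {ω | ∃ i, V i ω ∈ B} = 1 - (1 - p) ^ Fintype.card ι := by
  have : IsProbabilityMeasure P := h.isProbabilityMeasure
  have hunion : {ω | ∃ i, V i ω ∈ B} = ⋃ i, V i ⁻¹' B := by ext; simp
  have hcompl : (⋃ i, V i ⁻¹' B)ᶜ = ⋂ i ∈ Finset.univ, V i ⁻¹' Bᶜ := by ext; simp
  rw [hunion, ← compl_compl (⋃ i, V i ⁻¹' B),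
    probReal_compl_eq_one_sub (MeasurableSet.iUnion fun i => hV i hB).compl, hcompl,
    measureReal_def, h.measure_inter_preimage_eq_mul _ fun i _ => hB.compl, ENNReal.toReal_prod]
  simp_rw [← measureReal_def, Set.preimage_compl, probReal_compl_eq_one_sub (hV _ hB), hp]
  simp

lemma iIndepFun.measureReal_sum_indicator_le_le (h : iIndepFun V P) (hV : ∀ i, Measurable (V i))
    (hB : MeasurableSet B) (hp : ∀ i, P.real (V i ⁻¹' B) = p) {ε : ℝ} (hε : 0 ≤ ε) :
    P.real {ω | ∑ i, B.indicator 1 (V i ω) ≤ Fintype.card ι * p - ε} ≤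
      exp (-2 * ε ^ 2 / Fintype.card ι) := by
  have : IsProbabilityMeasure P := h.isProbabilityMeasure
  set Y : ι → Ω → ℝ := fun i ω => B.indicator 1 (V i ω)
  have hYmeas : ∀ i, Measurable (Y i) := fun i => (measurable_one.indicator hB).comp (hV i)
  have hmean : ∀ i, P[Y i] = p := fun i => by
    rw [← hp i, ← integral_indicator_one ((hV i) hB)]; rfl
  have hsubG : ∀ i ∈ Finset.univ, HasSubgaussianMGF (fun ω => p - Y i ω) (1 / 4) P := by
    intro i _
    have hbdd : ∀ᵐ ω ∂P, Y i ω ∈ Set.Icc (0 : ℝ) 1 := ae_of_all _ fun ω => by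
      by_cases hω : V i ω ∈ B <;> simp [Y, hω]
    convert (hasSubgaussianMGF_of_mem_Icc (hYmeas i).aemeasurable hbdd).neg using 1
    · ext ω; simp [hmean]
    · norm_num
  have hindep : iIndepFun (fun i ω => p - Y i ω) P :=
    h.comp (fun _ x => p - B.indicator 1 x) fun _ => (measurable_one.indicator hB).const_sub p
  calc P.real {ω | ∑ i, Y i ω ≤ Fintype.card ι * p - ε}
      = P.real {ω | ε ≤ ∑ i, (p - Y i ω)} := by
        congr 1; ext ω
        simp only [Set.mem_ofPred_eq, Finset.sum_sub_distrib, Finset.sum_const, Finset.card_univ,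
          nsmul_eq_mul]
        constructor <;> intro <;> linarith
    _ ≤ exp (-ε ^ 2 / (2 * ∑ _i : ι, (1 / 4 : NNReal))) :=
        HasSubgaussianMGF.measure_sum_ge_le_of_iIndepFun hindep hsubG hε
    _ = exp (-2 * ε ^ 2 / Fintype.card ι) := by
        congr 1; simp; ring

lemma iIndepFun.one_sub_exp_le_measureReal_le_sum_indicator (h : iIndepFun V P)
    (hV : ∀ i, Measurable (V i)) (hB : MeasurableSet B) (hp : ∀ i, P.real (V i ⁻¹' B) = p)
    (hp0 : 0 ≤ p) {n : ℝ} (hn0 : 0 ≤ n) (hn : n ≤ 2 * Fintype.card ι) :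
    1 - exp (-(n * p ^ 2) / 4) ≤ P.real {ω | n * p / 4 ≤ ∑ i, B.indicator 1 (V i ω)} := by
  have : IsProbabilityMeasure P := h.isProbabilityMeasure
  set m : ℝ := (Fintype.card ι : ℝ)
  set ε := m * p - n * p / 4 with hεdef
  have hεm : p * m / 2 ≤ ε := by nlinarith
  have hε : 0 ≤ ε := le_trans (by positivity) hεm
  -- Hoeffding's exponent `2 ε² / m` beats `n p² / 4` because `m ≥ n / 2`.
  have hexp : n * p ^ 2 / 4 ≤ 2 * ε ^ 2 / m := by
    rcases (Nat.cast_nonneg (Fintype.card ι) : (0 : ℝ) ≤ m).eq_or_lt with hm | hm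
    · have hm0 : m = 0 := hm.symm
      simp [hm0, show n = 0 by linarith]
    · rw [le_div_iff₀ hm]
      nlinarith [pow_le_pow_left₀ (by positivity) hεm 2, mul_le_mul_of_nonneg_left hn
        (by positivity : 0 ≤ p ^ 2 * m)]
  have hmeas : MeasurableSet {ω | n * p / 4 ≤ ∑ i, B.indicator 1 (V i ω)} :=
    measurableSet_le measurable_const
      (Finset.measurable_sum _ fun i _ => (measurable_one.indicator hB).comp (hV i))
  have htail : P.real {ω | n * p / 4 ≤ ∑ i, B.indicator 1 (V i ω)}ᶜ ≤ exp (-(n * p ^ 2) / 4) :=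
    calc _ ≤ P.real {ω | ∑ i, B.indicator 1 (V i ω) ≤ m * p - ε} :=
          measureReal_mono fun ω hω => by
            simp only [Set.mem_compl_iff, Set.mem_ofPred_eq, not_le] at hω ⊢
            linarith [hεdef]
      _ ≤ exp (-2 * ε ^ 2 / m) := h.measureReal_sum_indicator_le_le hV hB hp hε
      _ ≤ exp (-(n * p ^ 2) / 4) := exp_le_exp.2 (by rw [neg_mul, neg_div, neg_div]; linarith)
  rw [← compl_compl {ω | _ ≤ _}, probReal_compl_eq_one_sub hmeas.compl]
  linarith

end ProbabilityTheory

lemma le_iSup_sum_of_mem {α ι : Type*} [Fintype ι] {W : α → α → ℝ} {J₁ J₂ : Set α} {η c : ℝ}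
    (hη : 0 ≤ η) (hWη : ∀ x ∈ J₁, ∀ y ∈ J₂, η ≤ W x y) {x : ι → α} {i : ι} (hi : x i ∈ J₁)
    (hW0 : ∀ j, 0 ≤ W (x i) (x j)) {T : Finset ι}
    (hc : c ≤ ∑ j : T, J₂.indicator 1 (x j)) :
    η * c ≤ ⨆ i, ∑ j, W (x i) (x j) := by
  have hterm : ∀ j, η * J₂.indicator 1 (x j) ≤ W (x i) (x j) := fun j => by
    by_cases hj : x j ∈ J₂
    · simpa [hj] using hWη _ hi _ hj
    · simpa [hj] using hW0 j
  rw [Finset.sum_coe_sort T fun j => J₂.indicator 1 (x j)] at hc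
  calc η * c ≤ η * ∑ j ∈ T, J₂.indicator 1 (x j) := mul_le_mul_of_nonneg_left hc hη
    _ ≤ ∑ j ∈ T, W (x i) (x j) := by rw [Finset.mul_sum]; exact Finset.sum_le_sum fun j _ => hterm j
    _ ≤ ∑ j, W (x i) (x j) :=
        Finset.sum_le_sum_of_subset_of_nonneg (Finset.subset_univ T) fun j _ _ => hW0 j
    _ ≤ ⨆ i, ∑ j, W (x i) (x j) :=
        le_ciSup (f := fun i => ∑ j, W (x i) (x j)) (Set.finite_range _).bddAbove i

lemma ofReal_mul_le_measure_inter {Ω : Type*} [MeasurableSpace Ω] {μ : Measure Ω} {s t : Set Ω}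
    (hst : μ (s ∩ t) = μ s * μ t) {a b : ℝ} (ha0 : 0 ≤ a) (ha : a ≤ μ.real s)
    (hb : b ≤ μ.real t) : ENNReal.ofReal (a * b) ≤ μ (s ∩ t) := by
  rw [ENNReal.ofReal_mul ha0, hst]
  gcongr <;> exact ENNReal.ofReal_le_of_le_toReal ‹_›

open ProbabilityTheory

theorem max_expected_degree_lower_bound_prob_general
    -- `W` is a graphon: symmetric, measurable, with values in `[0,1]` on the unit square
    (W : ℝ → ℝ → ℝ)
    (hWrange : ∀ x ∈ Set.Icc (0 : ℝ) 1, ∀ y ∈ Set.Icc (0 : ℝ) 1,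
      W x y ∈ Set.Icc (0 : ℝ) 1)
    -- the rectangle `J₁ × J₂` on which `W ≥ η`, with intervals of length `ℓ`
    (η ℓ a₁ a₂ : ℝ) (hη : 0 < η) (hℓ : 0 < ℓ)
    (hJ₁ : Set.Icc a₁ (a₁ + ℓ) ⊆ Set.Icc (0 : ℝ) 1)
    (hJ₂ : Set.Icc a₂ (a₂ + ℓ) ⊆ Set.Icc (0 : ℝ) 1)
    (hWη : ∀ x ∈ Set.Icc a₁ (a₁ + ℓ), ∀ y ∈ Set.Icc a₂ (a₂ + ℓ), η ≤ W x y)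
    -- the i.i.d. uniform latent variables
    (N : ℕ)
    {Ω : Type} [MeasurableSpace Ω] (P : Measure Ω)
    (U : Fin N → Ω → ℝ)
    (hUmeas : ∀ i, Measurable (U i))
    (hUindep : iIndepFun U P)
    (hUlaw : ∀ i, Measure.map (U i) P = volume.restrict (Set.Icc (0 : ℝ) 1)) :
    ENNReal.ofReal ((1 - Real.exp (-(N * ℓ ^ 2) / 4)) * (1 - (1 - ℓ) ^ (N / 2))) ≤
      P {ω | η * N * ℓ / 4 ≤ ⨆ i : Fin N, ∑ j : Fin N, W (U i ω) (U j ω)} := by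
  set J₁ := Set.Icc a₁ (a₁ + ℓ)
  set J₂ := Set.Icc a₂ (a₂ + ℓ)
  obtain ⟨S, -, hS⟩ := Finset.exists_subset_card_eq (s := (Finset.univ : Finset (Fin N)))
    (n := N / 2) (by simpa using Nat.div_le_self N 2)
  set T := Sᶜ
  have hT : (N : ℝ) ≤ 2 * Fintype.card T := by
    rw [Fintype.card_coe, Finset.card_compl, hS, Fintype.card_fin]; norm_cast; omega
  let E₁ := {ω | ∃ i : S, U i ω ∈ J₁}
  let E₂ := {ω | N * ℓ / 4 ≤ ∑ j : T, J₂.indicator 1 (U j ω)}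
  have hE₁ : 1 - (1 - ℓ) ^ (N / 2) ≤ P.real E₁ := by
    rw [(hUindep.precomp Subtype.val_injective).measureReal_exists_mem (fun i => hUmeas i)
      measurableSet_Icc fun i =>
        measureReal_preimage_Icc_of_map_eq_restrict_Icc (hUmeas i) (hUlaw i) hJ₁ hℓ.le,
      Fintype.card_coe, hS]
  have hE₂ : 1 - Real.exp (-(N * ℓ ^ 2) / 4) ≤ P.real E₂ :=
    (hUindep.precomp Subtype.val_injective).one_sub_exp_le_measureReal_le_sum_indicator
      (fun i => hUmeas i) measurableSet_Icc
      (fun i => measureReal_preimage_Icc_of_map_eq_restrict_Icc (hUmeas i) (hUlaw i) hJ₂ hℓ.le)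
      hℓ.le (Nat.cast_nonneg N) hT
  have hindep : P (E₂ ∩ E₁) = P E₂ * P E₁ :=
    (hUindep.indepFun_finset T S disjoint_compl_left hUmeas).measure_inter_preimage_eq_mul
      {x | N * ℓ / 4 ≤ ∑ j, J₂.indicator 1 (x j)} {x | ∃ i, x i ∈ J₁}
      (by measurability) (by measurability)
  have hdeg : (E₂ ∩ E₁ : Set Ω) ≤ᵐ[P]
      ({ω | η * N * ℓ / 4 ≤ ⨆ i : Fin N, ∑ j : Fin N, W (U i ω) (U j ω)} : Set Ω) := by
    filter_upwards [ae_all_iff.2 fun j =>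
      ae_mem_of_map_eq_restrict (hUmeas j) measurableSet_Icc (hUlaw j)] with ω hω ⟨hcount, i, hi⟩
    show _ ≤ _
    rw [mul_assoc, mul_div_assoc]
    exact le_iSup_sum_of_mem (x := fun j => U j ω) hη.le hWη hi
      (fun j => (hWrange _ (hω i) _ (hω j)).1) hcount
  calc _ ≤ P (E₂ ∩ E₁) := ofReal_mul_le_measure_inter hindep
          (sub_nonneg.2 (Real.exp_le_one_iff.2 (by nlinarith))) hE₂ hE₁
    _ ≤ _ := measure_mono_ae hdeg

/-- If a graphon `W` satisfies `W ≥ η` on a product of two intervals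
`J₁ × J₂ ⊆ [0,1]²` of length `ℓ`, then the maximal expected degree `d̄_{(N)}` of the weighted
graph built from `N` i.i.d. uniform latent variables satisfies
`P[d̄_{(N)} ≥ ηNℓ/4] ≥ (1 - e^{-Nℓ²/4})(1 - (1-ℓ)^⌊N/2⌋)`. -/
theorem max_expected_degree_lower_bound_prob
    -- `W` is a graphon: symmetric, measurable, with values in `[0,1]` on the unit square
    (W : ℝ → ℝ → ℝ)
    (hWmeas : Measurable (Function.uncurry W))
    (hWsymm : ∀ x y, W x y = W y x)
    (hWrange : ∀ x ∈ Set.Icc (0 : ℝ) 1, ∀ y ∈ Set.Icc (0 : ℝ) 1,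
      W x y ∈ Set.Icc (0 : ℝ) 1)
    -- the rectangle `J₁ × J₂` on which `W ≥ η`, with intervals of length `ℓ`
    (η ℓ a₁ a₂ : ℝ) (hη : 0 < η) (hℓ : 0 < ℓ) (hℓ1 : ℓ ≤ 1)
    (hJ₁ : Set.Icc a₁ (a₁ + ℓ) ⊆ Set.Icc (0 : ℝ) 1)
    (hJ₂ : Set.Icc a₂ (a₂ + ℓ) ⊆ Set.Icc (0 : ℝ) 1)
    (hWη : ∀ x ∈ Set.Icc a₁ (a₁ + ℓ), ∀ y ∈ Set.Icc a₂ (a₂ + ℓ), η ≤ W x y)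
    -- the i.i.d. uniform latent variables
    (N : ℕ) (hN : 1 ≤ N)
    {Ω : Type} [MeasurableSpace Ω] (P : Measure Ω) [IsProbabilityMeasure P]
    (U : Fin N → Ω → ℝ)
    (hUmeas : ∀ i, Measurable (U i))
    (hUindep : iIndepFun U P)
    (hUlaw : ∀ i, Measure.map (U i) P = volume.restrict (Set.Icc (0 : ℝ) 1)) :
    ENNReal.ofReal ((1 - Real.exp (-(N * ℓ ^ 2) / 4)) * (1 - (1 - ℓ) ^ (N / 2))) ≤
      P {ω | η * N * ℓ / 4 ≤ ⨆ i : Fin N, ∑ j : Fin N, W (U i ω) (U j ω)} :=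
  max_expected_degree_lower_bound_prob_general W hWrange η ℓ a₁ a₂ hη hℓ hJ₁ hJ₂ hWη N P U hUmeas
    hUindep hUlaw
end

section
/- Let W be a graphon and assume there exist η > 0 and intervals J_1, J_2 ⊆ [0,1], each of length ℓ with 0 < ℓ ≤ 1, such that W(x,y) ≥ η for all (x,y) ∈ J_1 × J_2. Let (U_i)_{i≥1} be an infinite sequence of independent random variables, each uniformly distributed on [0,1], and for each N ≥ 1 define d̄_{(N)} = max_{1≤i≤N} Σ_{j=1}^N W(U_i, U_j). Then, almost surely, liminf_{N→∞} d̄_{(N)}/N ≥ η ℓ / 4; combined with the trivial bound d̄_{(N)} ≤ N, this means d̄_{(N)} = Θ(N) almost surely. -/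
/-!
By the strong law of large numbers, almost surely some latent variable `U i₀` falls in `J₁`
and the fraction of the first `N` latent variables falling in `J₂` tends to `ℓ`. For `N > i₀`
the degree of vertex `i₀` is then at least `η` times the number of `j < N` with `U j ∈ J₂`,
so `liminf d̄_{(N)} / N ≥ η ℓ`.
-/

open MeasureTheory ProbabilityTheory Filter Topology Finset

section EmpiricalFreq

variable {α : Type*}

noncomputable def empiricalFreq (s : Set α) (x : ℕ → α) (n : ℕ) : ℝ :=
  (n : ℝ)⁻¹ * ∑ i ∈ range n, s.indicator 1 (x i)

theorem exists_mem_of_tendsto_empiricalFreq {s : Set α} {x : ℕ → α} {c : ℝ}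
    (h : Tendsto (empiricalFreq s x) atTop (𝓝 c)) (hc : c ≠ 0) : ∃ i, x i ∈ s := by
  by_contra! hx
  have hzero : empiricalFreq s x = 0 := by
    ext n
    simp [empiricalFreq, Set.indicator_of_notMem (hx _)]
  exact hc (tendsto_nhds_unique h (hzero ▸ tendsto_const_nhds))

theorem tendsto_empiricalFreq_ae {Ω : Type*} [MeasurableSpace Ω] [MeasurableSpace α]
    {P : Measure Ω} [IsFiniteMeasure P] {μ : Measure α} {U : ℕ → Ω → α}
    (hU : ∀ i, Measurable (U i)) (hindep : Pairwise fun i j => IndepFun (U i) (U j) P)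
    (hlaw : ∀ i, P.map (U i) = μ) {s : Set α} (hs : MeasurableSet s) :
    ∀ᵐ ω ∂P, Tendsto (empiricalFreq s fun i => U i ω) atTop (𝓝 (μ.real s)) := by
  have hind : Measurable (s.indicator (1 : α → ℝ)) := measurable_one.indicator hs
  set X : ℕ → Ω → ℝ := fun i => s.indicator 1 ∘ U i
  have hint : Integrable (X 0) P :=
    Integrable.comp_measurable ((integrable_const 1).indicator hs) (hU 0)
  have hmean : ∫ ω, X 0 ω ∂P = μ.real s := by
    rw [← integral_indicator_one hs, ← hlaw 0,
      integral_map (hU 0).aemeasurable hind.aestronglyMeasurable]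
    rfl
  have hident (i : ℕ) : IdentDistrib (X i) (X 0) P P :=
    IdentDistrib.comp ⟨(hU i).aemeasurable, (hU 0).aemeasurable, by rw [hlaw i, hlaw 0]⟩ hind
  filter_upwards [strong_law_ae X hint (fun i j hij => (hindep hij).comp hind hind) hident]
    with ω hω
  rwa [hmean] at hω

end EmpiricalFreq

section MaxDegree

variable {α : Type*} (W : α → α → ℝ) (x : ℕ → α)

noncomputable def maxDegree (n : ℕ) : ℝ :=
  ⨆ i : Fin n, ∑ j : Fin n, W (x i) (x j)

variable {W x}

theorem maxDegree_le (hW : ∀ i j, W (x i) (x j) ≤ 1) (n : ℕ) : maxDegree W x n ≤ n := by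
  rcases isEmpty_or_nonempty (Fin n) with hn | hn
  · simp [maxDegree]
  · refine ciSup_le fun i => ?_
    calc ∑ j : Fin n, W (x i) (x j) ≤ ∑ _j : Fin n, (1 : ℝ) := sum_le_sum fun j _ => hW i j
      _ = n := by simp

theorem mul_empiricalFreq_le_maxDegree_div {s t : Set α} {η : ℝ}
    (hW : ∀ i j, 0 ≤ W (x i) (x j)) (hWη : ∀ a ∈ s, ∀ b ∈ t, η ≤ W a b)
    {i₀ n : ℕ} (hi₀ : x i₀ ∈ s) (hi₀n : i₀ < n) :
    η * empiricalFreq t x n ≤ maxDegree W x n / n := by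
  have hdeg : η * ∑ j ∈ range n, t.indicator 1 (x j) ≤ ∑ j : Fin n, W (x i₀) (x j) := by
    rw [mul_sum, ← Fin.sum_univ_eq_sum_range]
    refine sum_le_sum fun j _ => ?_
    by_cases hj : x j ∈ t
    · simpa [Set.indicator_of_mem hj] using hWη _ hi₀ _ hj
    · simpa [Set.indicator_of_notMem hj] using hW i₀ j
  have hmax : ∑ j : Fin n, W (x i₀) (x j) ≤ maxDegree W x n :=
    le_ciSup (f := fun i : Fin n => ∑ j : Fin n, W (x i) (x j)) (Set.finite_range _).bddAbove
      ⟨i₀, hi₀n⟩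
  rw [empiricalFreq, mul_left_comm, ← div_eq_inv_mul]
  gcongr
  exact hdeg.trans hmax

theorem le_liminf_maxDegree_div {s t : Set α} {η ℓ : ℝ}
    (hW0 : ∀ i j, 0 ≤ W (x i) (x j)) (hW1 : ∀ i j, W (x i) (x j) ≤ 1)
    (hWη : ∀ a ∈ s, ∀ b ∈ t, η ≤ W a b) (hs : ∃ i, x i ∈ s)
    (ht : Tendsto (empiricalFreq t x) atTop (𝓝 ℓ)) :
    η * ℓ ≤ liminf (fun n => maxDegree W x n / n) atTop := by
  obtain ⟨i₀, hi₀⟩ := hs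
  have hlim : Tendsto (fun n => η * empiricalFreq t x n) atTop (𝓝 (η * ℓ)) := ht.const_mul η
  have hcobdd : IsCoboundedUnder (· ≥ ·) atTop fun n => maxDegree W x n / n :=
    isCoboundedUnder_ge_of_le atTop (x := 1) fun n =>
      div_le_one_of_le₀ (maxDegree_le hW1 n) n.cast_nonneg
  rw [← hlim.liminf_eq]
  refine liminf_le_liminf ?_ hlim.isBoundedUnder_ge hcobdd
  filter_upwards [eventually_gt_atTop i₀] with n hn
  exact mul_empiricalFreq_le_maxDegree_div hW0 hWη hi₀ hn

end MaxDegree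

theorem max_expected_degree_linear_growth_general
    -- `W` is a graphon: symmetric, measurable, with values in `[0,1]` on the unit square
    (W : ℝ → ℝ → ℝ)
    (hWrange : ∀ x ∈ Set.Icc (0 : ℝ) 1, ∀ y ∈ Set.Icc (0 : ℝ) 1,
      W x y ∈ Set.Icc (0 : ℝ) 1)
    -- the rectangle `J₁ × J₂` on which `W ≥ η`, with intervals of length `ℓ`
    (η ℓ a₁ a₂ : ℝ) (hη : 0 < η) (hℓ : 0 < ℓ)
    (hJ₁ : Set.Icc a₁ (a₁ + ℓ) ⊆ Set.Icc (0 : ℝ) 1)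
    (hJ₂ : Set.Icc a₂ (a₂ + ℓ) ⊆ Set.Icc (0 : ℝ) 1)
    (hWη : ∀ x ∈ Set.Icc a₁ (a₁ + ℓ), ∀ y ∈ Set.Icc a₂ (a₂ + ℓ), η ≤ W x y)
    -- the infinite i.i.d. sequence of uniform latent variables
    {Ω : Type} [MeasurableSpace Ω] (P : Measure Ω) [IsProbabilityMeasure P]
    (U : ℕ → Ω → ℝ)
    (hUmeas : ∀ i, Measurable (U i))
    (hUindep : iIndepFun U P)
    (hUlaw : ∀ i, Measure.map (U i) P = volume.restrict (Set.Icc (0 : ℝ) 1))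
    -- the maximal expected degree for each `N`
    (dbar : Ω → ℕ → ℝ)
    (hdbar : ∀ ω N, dbar ω N = ⨆ i : Fin N, ∑ j : Fin N, W (U i ω) (U j ω)) :
    ∀ᵐ ω ∂P,
      η * ℓ / 4 ≤ Filter.liminf (fun N : ℕ => dbar ω N / N) Filter.atTop ∧
      ∀ N : ℕ, dbar ω N ≤ N := by
  have hfreq (a : ℝ) (ha : Set.Icc a (a + ℓ) ⊆ Set.Icc 0 1) :
      ∀ᵐ ω ∂P, Tendsto (empiricalFreq (Set.Icc a (a + ℓ)) fun i => U i ω) atTop (𝓝 ℓ) := by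
    have hlen : (volume.restrict (Set.Icc (0 : ℝ) 1)).real (Set.Icc a (a + ℓ)) = ℓ := by
      rw [measureReal_restrict_apply measurableSet_Icc, Set.inter_eq_self_of_subset_left ha,
        Real.volume_real_Icc_of_le (by linarith)]
      ring
    simpa only [hlen] using tendsto_empiricalFreq_ae hUmeas
      (fun i j hij => hUindep.indepFun hij) hUlaw (s := Set.Icc a (a + ℓ)) measurableSet_Icc
  have hunit : ∀ᵐ ω ∂P, ∀ i, U i ω ∈ Set.Icc (0 : ℝ) 1 :=
    ae_all_iff.2 fun i => ae_of_ae_map (hUmeas i).aemeasurable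
      (hUlaw i ▸ ae_restrict_mem measurableSet_Icc)
  filter_upwards [hfreq a₁ hJ₁, hfreq a₂ hJ₂, hunit] with ω hJ₁freq hJ₂freq hω
  have hdbar_eq : dbar ω = maxDegree W fun i => U i ω := funext (hdbar ω)
  have hW0 (i j : ℕ) : 0 ≤ W (U i ω) (U j ω) := (hWrange _ (hω i) _ (hω j)).1
  have hW1 (i j : ℕ) : W (U i ω) (U j ω) ≤ 1 := (hWrange _ (hω i) _ (hω j)).2
  rw [hdbar_eq]
  refine ⟨le_trans ?_ (le_liminf_maxDegree_div hW0 hW1 hWη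
    (exists_mem_of_tendsto_empiricalFreq hJ₁freq hℓ.ne') hJ₂freq), maxDegree_le hW1⟩
  linarith [mul_pos hη hℓ]

/-- If a graphon `W` satisfies `W ≥ η` on a product of two intervals
`J₁ × J₂ ⊆ [0,1]²` of length `ℓ`, and `(U_i)_{i≥1}` is an i.i.d. sequence of uniform
latent variables, then almost surely `liminf_N d̄_{(N)}/N ≥ ηℓ/4`, and (combined with
the trivial bound `d̄_{(N)} ≤ N`) `d̄_{(N)} = Θ(N)` almost surely. -/
theorem max_expected_degree_linear_growth
    -- `W` is a graphon: symmetric, measurable, with values in `[0,1]` on the unit square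
    (W : ℝ → ℝ → ℝ)
    (hWmeas : Measurable (Function.uncurry W))
    (hWsymm : ∀ x y, W x y = W y x)
    (hWrange : ∀ x ∈ Set.Icc (0 : ℝ) 1, ∀ y ∈ Set.Icc (0 : ℝ) 1,
      W x y ∈ Set.Icc (0 : ℝ) 1)
    -- the rectangle `J₁ × J₂` on which `W ≥ η`, with intervals of length `ℓ`
    (η ℓ a₁ a₂ : ℝ) (hη : 0 < η) (hℓ : 0 < ℓ) (hℓ1 : ℓ ≤ 1)
    (hJ₁ : Set.Icc a₁ (a₁ + ℓ) ⊆ Set.Icc (0 : ℝ) 1)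
    (hJ₂ : Set.Icc a₂ (a₂ + ℓ) ⊆ Set.Icc (0 : ℝ) 1)
    (hWη : ∀ x ∈ Set.Icc a₁ (a₁ + ℓ), ∀ y ∈ Set.Icc a₂ (a₂ + ℓ), η ≤ W x y)
    -- the infinite i.i.d. sequence of uniform latent variables
    {Ω : Type} [MeasurableSpace Ω] (P : Measure Ω) [IsProbabilityMeasure P]
    (U : ℕ → Ω → ℝ)
    (hUmeas : ∀ i, Measurable (U i))
    (hUindep : iIndepFun U P)
    (hUlaw : ∀ i, Measure.map (U i) P = volume.restrict (Set.Icc (0 : ℝ) 1))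
    -- the maximal expected degree for each `N`
    (dbar : Ω → ℕ → ℝ)
    (hdbar : ∀ ω N, dbar ω N = ⨆ i : Fin N, ∑ j : Fin N, W (U i ω) (U j ω)) :
    ∀ᵐ ω ∂P,
      η * ℓ / 4 ≤ Filter.liminf (fun N : ℕ => dbar ω N / N) Filter.atTop ∧
      ∀ N : ℕ, dbar ω N ≤ N :=
  max_expected_degree_linear_growth_general W hWrange η ℓ a₁ a₂ hη hℓ hJ₁ hJ₂ hWη P U hUmeas hUindep
    hUlaw dbar hdbar
end
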